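/- Let Ω' ⊂ ℝ^d be open and bounded, μ' a finite nonnegative measure on Ω', and γ > 0. Define Ψ(v;γ) = (2πγ²)^{−1/2} ∫_{−∞}^v exp(−t²/(2γ²)) dt. If v ∈ L²(μ') then the function x ↦ log Ψ(v(x);γ) belongs to L¹(μ'). -/

import Mathlib

open Real MeasureTheory

/-- The CDF of a centered Gaussian with standard deviation `γ`. -/
noncomputable def gaussCDF (γ v : ℝ) : ℝ :=
  (Real.sqrt (2 * Real.pi * γ ^ 2))⁻¹ * ∫ t in Set.Iic v, Real.exp (-t ^ 2 / (2 * γ ^ 2))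

/-!
`Ψ` is the distribution function of `N(0, γ²)`, so `Ψ ≤ 1` and `log Ψ ≤ 0`. Conversely, on
`(w - γ, w]` one has `t² ≤ 2γ² + 2w²`, so integrating the Gaussian density over that interval
gives `Ψ(w) ≥ e^{-1 - w²/γ²} / √(2π)`. Hence `|log Ψ(w)| ≤ log √(2π) + 1 + w²/γ²`, which is
integrable along `v` when `v ∈ L²` and the measure is finite.
-/

open ProbabilityTheory NNReal Set

section GaussCDF

variable {γ : ℝ}

lemma gaussCDF_eq_setIntegral_gaussianPDFReal (w : ℝ) :
    gaussCDF γ w = ∫ t in Iic w, gaussianPDFReal 0 (nnabs γ ^ 2) t := by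
  rw [gaussCDF, ← integral_const_mul]
  simp [gaussianPDFReal]

lemma gaussCDF_eq_measureReal_Iic (hγ : γ ≠ 0) (w : ℝ) :
    gaussCDF γ w = (gaussianReal 0 (nnabs γ ^ 2)).real (Iic w) := by
  have hv : nnabs γ ^ 2 ≠ 0 := by simpa [← NNReal.coe_eq_zero] using hγ
  rw [measureReal_def, gaussianReal_apply_eq_integral 0 hv, ENNReal.toReal_ofReal
    (setIntegral_nonneg measurableSet_Iic fun t _ => gaussianPDFReal_nonneg _ _ t),
    gaussCDF_eq_setIntegral_gaussianPDFReal]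

lemma gaussCDF_le_one (hγ : γ ≠ 0) (w : ℝ) : gaussCDF γ w ≤ 1 := by
  rw [gaussCDF_eq_measureReal_Iic hγ]
  exact measureReal_le_one

lemma monotone_gaussCDF (hγ : γ ≠ 0) : Monotone (gaussCDF γ) := by
  intro a b hab
  simp only [gaussCDF_eq_measureReal_Iic hγ]
  exact measureReal_mono (Iic_subset_Iic.mpr hab)

lemma inv_sqrt_two_pi_mul_exp_le_gaussCDF (hγ : 0 < γ) (w : ℝ) :
    (√(2 * π))⁻¹ * exp (-(1 + w ^ 2 / γ ^ 2)) ≤ gaussCDF γ w := by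
  have hpdf : ∀ t ∈ Ioc (w - γ) w,
      (√(2 * π) * γ)⁻¹ * exp (-(1 + w ^ 2 / γ ^ 2)) ≤ gaussianPDFReal 0 (nnabs γ ^ 2) t := by
    rintro t ⟨ht₁, ht₂⟩
    have ht : t ^ 2 ≤ 2 * γ ^ 2 + 2 * w ^ 2 := by
      nlinarith [mul_nonneg (sub_nonneg.2 ht₂) (sub_nonneg.2 ht₁.le), sq_nonneg (w + γ)]
    have hexp : -(1 + w ^ 2 / γ ^ 2) ≤ -t ^ 2 / (2 * γ ^ 2) := by
      calc -(1 + w ^ 2 / γ ^ 2) = -(2 * γ ^ 2 + 2 * w ^ 2) / (2 * γ ^ 2) := by field_simp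
        _ ≤ -t ^ 2 / (2 * γ ^ 2) := by gcongr
    simp only [gaussianPDFReal, coe_pow, coe_nnabs, sq_abs, sub_zero,
      sqrt_mul (by positivity : 0 ≤ 2 * π) (γ ^ 2), sqrt_sq hγ.le]
    gcongr
  calc (√(2 * π))⁻¹ * exp (-(1 + w ^ 2 / γ ^ 2))
      = (√(2 * π) * γ)⁻¹ * exp (-(1 + w ^ 2 / γ ^ 2)) * volume.real (Ioc (w - γ) w) := by
        rw [volume_real_Ioc_of_le (by linarith), sub_sub_cancel]
        field_simp
    _ ≤ ∫ t in Ioc (w - γ) w, gaussianPDFReal 0 (nnabs γ ^ 2) t :=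
        setIntegral_ge_of_const_le_real measurableSet_Ioc measure_Ioc_lt_top.ne hpdf
          (integrable_gaussianPDFReal _ _).integrableOn
    _ ≤ gaussCDF γ w := by
        rw [gaussCDF_eq_setIntegral_gaussianPDFReal]
        exact setIntegral_mono_set (integrable_gaussianPDFReal _ _).integrableOn
          (ae_of_all _ (gaussianPDFReal_nonneg _ _)) Ioc_subset_Iic_self.eventuallyLE

lemma abs_log_gaussCDF_le (hγ : 0 < γ) (w : ℝ) :
    |log (gaussCDF γ w)| ≤ log √(2 * π) + 1 + w ^ 2 / γ ^ 2 := by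
  have hlower := inv_sqrt_two_pi_mul_exp_le_gaussCDF hγ w
  have hpos : 0 < gaussCDF γ w := (by positivity : (0 : ℝ) < _).trans_le hlower
  have hlog := log_le_log (by positivity) hlower
  rw [log_mul (by positivity) (exp_pos _).ne', log_inv, log_exp] at hlog
  rw [abs_of_nonpos (log_nonpos hpos.le (gaussCDF_le_one hγ.ne' w))]
  linarith

end GaussCDF

theorem MeasureTheory.MemLp.integrable_log_gaussCDF {α : Type*} [MeasurableSpace α]
    {μ : Measure α} [IsFiniteMeasure μ] {v : α → ℝ} (hv : MemLp v 2 μ) {γ : ℝ} (hγ : 0 < γ) :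
    Integrable (fun x => log (gaussCDF γ (v x))) μ := by
  have hbound : Integrable (fun x => log √(2 * π) + 1 + v x ^ 2 / γ ^ 2) μ :=
    (integrable_const _).add (hv.integrable_sq.div_const _)
  refine hbound.mono' ?_ (ae_of_all _ fun x => abs_log_gaussCDF_le hγ (v x))
  exact ((monotone_gaussCDF hγ.ne').measurable.log.comp_aemeasurable
    hv.aestronglyMeasurable.aemeasurable).aestronglyMeasurable

theorem logPsi_of_L2_integrable_general
    {d : ℕ}
    (μ' : Measure (EuclideanSpace ℝ (Fin d))) [IsFiniteMeasure μ']
    (γ : ℝ) (hγ : 0 < γ)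
    (v : EuclideanSpace ℝ (Fin d) → ℝ)
    (hv : MeasureTheory.MemLp v 2 μ') :
    MeasureTheory.Integrable (fun x => Real.log (gaussCDF γ (v x))) μ' :=
  hv.integrable_log_gaussCDF hγ

/-- If `Ω' ⊂ ℝ^d` is open and bounded, `μ'` is a finite nonnegative measure on `Ω'`,
`γ > 0`, and `v ∈ L²(μ')`, then `x ↦ log Ψ(v(x); γ)` belongs to `L¹(μ')`. -/
theorem logPsi_of_L2_integrable
    {d : ℕ} (Ω' : Set (EuclideanSpace ℝ (Fin d)))
    (hΩ'open : IsOpen Ω') (hΩ'bdd : Bornology.IsBounded Ω')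
    (μ' : Measure (EuclideanSpace ℝ (Fin d))) [IsFiniteMeasure μ']
    (hsupp : μ' Ω'ᶜ = 0)
    (γ : ℝ) (hγ : 0 < γ)
    (v : EuclideanSpace ℝ (Fin d) → ℝ)
    (hv : MeasureTheory.MemLp v 2 μ') :
    MeasureTheory.Integrable (fun x => Real.log (gaussCDF γ (v x))) μ' :=
  logPsi_of_L2_integrable_general μ' γ hγ v hv
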